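/- arXiv:2403.00182 — 2 statements merged into one kernel-verified Lean document; each statement's English description precedes it below -/
import Mathlib

section
/- For every k ≥ 2, the translation of the clause x₁ ∨ ⋯ ∨ x_k into T⁰(x₁ ∨ ⋯ ∨ x_k, 1̂), obtained by substituting the constant true for b_{k−1}, is a strict (k−1, 3(k−1)/2)-gadget from kSAT to Max2XOR with k−2 auxiliary variables b₁,…,b_{k−2}. That is: its total weight is 3(k−1)/2; for every assignment I of x₁,…,x_k satisfying x₁ ∨ ⋯ ∨ x_k, every extension of I to b₁,…,b_{k−2} has value at most k−1 and some extension attains value k−1; and for every I falsifying the clause, every extension has value at most k−2 and some extension attains value k−2. -/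
open Finset

/-- Number of satisfied constraints among the triangle {p ⊕ q = 1, p ⊕ r = 0, r ⊕ q = 0}. -/
def triCount (p q r : Bool) : ℕ :=
  (if xor p q = true then 1 else 0) +
  (if xor p r = false then 1 else 0) +
  (if xor r q = false then 1 else 0)

/-- Number of constraints of T⁰(x₁ ∨ ⋯ ∨ x_k, b_{k−1}) satisfied by the assignment
given by `x` (values of x₁,…,x_k) and `b` (values of b₁,…,b_{k−1}), all 1-indexed.
The j-th triangle (j = 1,…,k−1) is {p_j ⊕ x_{j+1} = 1, p_j ⊕ b_j = 0, b_j ⊕ x_{j+1} = 0}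
where p₁ = x₁ and p_j = b_{j−1} for j ≥ 2. -/
def T0count (k : ℕ) (x b : ℕ → Bool) : ℕ :=
  ∑ j ∈ Finset.Icc 1 (k - 1), triCount (if j = 1 then x 1 else b (j - 1)) (x (j + 1)) (b j)

/-- Value (total satisfied weight, each constraint having weight 1/2) of
T⁰(x₁ ∨ ⋯ ∨ x_k, b_{k−1}) under the assignment given by `x` and `b`. -/
def T0val (k : ℕ) (x b : ℕ → Bool) : ℚ := (T0count k x b : ℚ) / 2

lemma triCount_le_two (p q r : Bool) : triCount p q r ≤ 2 := by
  cases p <;> cases q <;> cases r <;> decide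

/-- Running OR: `B x j = x 1 ∨ ⋯ ∨ x (j+1)`. -/
def B (x : ℕ → Bool) : ℕ → Bool
  | 0 => x 1
  | j + 1 => B x j || x (j + 2)

lemma B_true_iff (x : ℕ → Bool) (j : ℕ) :
    B x j = true ↔ ∃ i ∈ Finset.Icc 1 (j + 1), x i = true := by
  induction j with
  | zero => simp [B]
  | succ j ih =>
    simp only [B, Bool.or_eq_true, ih]
    constructor
    · rintro (⟨i, hi, hxi⟩ | h)
      · refine ⟨i, ?_, hxi⟩
        simp only [mem_Icc] at hi ⊢
        omega
      · exact ⟨j + 2, by simp, h⟩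
    · rintro ⟨i, hi, hxi⟩
      simp only [mem_Icc] at hi
      rcases eq_or_lt_of_le hi.2 with h | h
      · right; rw [← h]; exact hxi
      · left; exact ⟨i, by simp only [mem_Icc]; omega, hxi⟩

lemma T0count_B (k : ℕ) (hk : 2 ≤ k) (x : ℕ → Bool) :
    T0count k x (B x) = 2 * (k - 1) := by
  have hterm : ∀ j ∈ Finset.Icc 1 (k - 1),
      triCount (if j = 1 then x 1 else B x (j - 1)) (x (j + 1)) (B x j) = 2 := by
    intro j hj
    simp only [mem_Icc] at hj
    obtain ⟨m, rfl⟩ : ∃ m, j = m + 1 := ⟨j - 1, by omega⟩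
    have h1 : (if m + 1 = 1 then x 1 else B x (m + 1 - 1)) = B x m := by
      rcases Nat.eq_zero_or_pos m with rfl | hm
      · simp [B]
      · rw [if_neg (by omega)]
        simp only [Nat.add_sub_cancel]
    rw [h1, show B x (m + 1) = (B x m || x (m + 2)) from rfl]
    cases B x m <;> cases x (m + 1 + 1) <;> decide
  unfold T0count
  rw [Finset.sum_congr rfl hterm, Finset.sum_const, Nat.card_Icc, smul_eq_mul]
  omega

theorem T0_is_strict_gadget (k : ℕ) (hk : 2 ≤ k) :
    (∑ j ∈ Finset.Icc 1 (k - 1), ((1 : ℚ)/2 + 1/2 + 1/2) = 3 * ((k : ℚ) - 1) / 2) ∧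
    (∀ x : ℕ → Bool, (∃ i ∈ Finset.Icc 1 k, x i = true) →
      (∀ b : ℕ → Bool, b (k - 1) = true → T0val k x b ≤ (k : ℚ) - 1) ∧
      (∃ b : ℕ → Bool, b (k - 1) = true ∧ T0val k x b = (k : ℚ) - 1)) ∧
    (∀ x : ℕ → Bool, (∀ i ∈ Finset.Icc 1 k, x i = false) →
      (∀ b : ℕ → Bool, b (k - 1) = true → T0val k x b ≤ (k : ℚ) - 2) ∧
      (∃ b : ℕ → Bool, b (k - 1) = true ∧ T0val k x b = (k : ℚ) - 2)) := by
  have hk1 : (1 : ℕ) ≤ k := by omega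
  have hcast1 : ((k - 1 : ℕ) : ℚ) = (k : ℚ) - 1 := by
    rw [Nat.cast_sub hk1]; norm_num
  have hcast2 : ((k - 2 : ℕ) : ℚ) = (k : ℚ) - 2 := by
    rw [Nat.cast_sub hk]; norm_num
  refine ⟨?_, ?_, ?_⟩
  · rw [Finset.sum_const, Nat.card_Icc, nsmul_eq_mul]
    have : (k - 1 + 1 - 1 : ℕ) = k - 1 := by omega
    rw [this, hcast1]
    ring
  · -- satisfied case
    intro x hx
    constructor
    · intro b hb
      have hle : T0count k x b ≤ 2 * (k - 1) := by
        unfold T0count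
        calc ∑ j ∈ Finset.Icc 1 (k - 1),
              triCount (if j = 1 then x 1 else b (j - 1)) (x (j + 1)) (b j)
            ≤ ∑ j ∈ Finset.Icc 1 (k - 1), 2 :=
              Finset.sum_le_sum (fun j _ => triCount_le_two _ _ _)
          _ = 2 * (k - 1) := by
              rw [Finset.sum_const, Nat.card_Icc, smul_eq_mul]; omega
      unfold T0val
      rw [div_le_iff₀ (by norm_num)]
      calc (T0count k x b : ℚ) ≤ ((2 * (k - 1) : ℕ) : ℚ) := by exact_mod_cast hle
        _ = ((k : ℚ) - 1) * 2 := by push_cast [hk1]; ring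
    · refine ⟨B x, ?_, ?_⟩
      · rw [B_true_iff]
        have : k - 1 + 1 = k := by omega
        rw [this]
        exact hx
      · unfold T0val
        rw [T0count_B k hk x]
        push_cast [hk1]
        ring
  · -- falsified case
    intro x hx
    constructor
    · intro b hb
      -- find minimal j ≥ 1 with b j = true
      have hPex : ∃ j, 1 ≤ j ∧ b j = true := ⟨k - 1, by omega, hb⟩
      set j0 := Nat.find hPex with hj0def
      obtain ⟨hj01, hbj0⟩ := Nat.find_spec hPex
      have hj0le : j0 ≤ k - 1 := Nat.find_min' hPex ⟨by omega, hb⟩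
      have hj0mem : j0 ∈ Finset.Icc 1 (k - 1) := by simp only [mem_Icc]; omega
      have hp : (if j0 = 1 then x 1 else b (j0 - 1)) = false := by
        rcases eq_or_lt_of_le hj01 with h | h
        · rw [if_pos h.symm]
          exact hx 1 (by simp only [mem_Icc]; omega)
        · rw [if_neg (by omega)]
          by_contra hcon
          have : b (j0 - 1) = true := by
            cases hbb : b (j0 - 1)
            · exact absurd hbb hcon
            · rfl
          exact Nat.find_min hPex (show j0 - 1 < j0 by omega) ⟨by omega, this⟩
      have hq : x (j0 + 1) = false := hx (j0 + 1) (by simp only [mem_Icc]; omega)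
      have hterm0 : triCount (if j0 = 1 then x 1 else b (j0 - 1)) (x (j0 + 1)) (b j0) = 0 := by
        rw [hp, hq, hbj0]; decide
      have hle : T0count k x b ≤ 2 * (k - 2) := by
        unfold T0count
        rw [← Finset.sum_erase_add _ _ hj0mem, hterm0, add_zero]
        calc ∑ j ∈ (Finset.Icc 1 (k - 1)).erase j0,
              triCount (if j = 1 then x 1 else b (j - 1)) (x (j + 1)) (b j)
            ≤ ∑ j ∈ (Finset.Icc 1 (k - 1)).erase j0, 2 :=
              Finset.sum_le_sum (fun j _ => triCount_le_two _ _ _)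
          _ = 2 * (k - 2) := by
              rw [Finset.sum_const, Finset.card_erase_of_mem hj0mem, Nat.card_Icc,
                smul_eq_mul]
              omega
      unfold T0val
      rw [div_le_iff₀ (by norm_num)]
      calc (T0count k x b : ℚ) ≤ ((2 * (k - 2) : ℕ) : ℚ) := by exact_mod_cast hle
        _ = ((k : ℚ) - 2) * 2 := by push_cast [hk]; ring
    · refine ⟨fun _ => true, rfl, ?_⟩
      have h1mem : (1 : ℕ) ∈ Finset.Icc 1 (k - 1) := by simp only [mem_Icc]; omega
      have hcount : T0count k x (fun _ => true) = 2 * (k - 2) := by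
        unfold T0count
        rw [← Finset.sum_erase_add _ _ h1mem]
        have hterm1 : triCount (if (1 : ℕ) = 1 then x 1 else true) (x (1 + 1)) true = 0 := by
          rw [if_pos rfl, hx 1 (by simp only [mem_Icc]; omega),
            hx 2 (by simp only [mem_Icc]; omega)]
          decide
        rw [hterm1, add_zero]
        have hterm2 : ∀ j ∈ (Finset.Icc 1 (k - 1)).erase 1,
            triCount (if j = 1 then x 1 else (fun _ => true) (j - 1)) (x (j + 1))
              ((fun _ => true) j) = 2 := by
          intro j hj
          simp only [Finset.mem_erase, mem_Icc] at hj
          rw [if_neg hj.1, hx (j + 1) (by simp only [mem_Icc]; omega)]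
          show triCount true false true = 2
          decide
        rw [Finset.sum_congr rfl hterm2, Finset.sum_const,
          Finset.card_erase_of_mem h1mem, Nat.card_Icc, smul_eq_mul]
        omega
      unfold T0val
      rw [hcount]
      push_cast [hk]
      ring
end

section
/- Let k ≥ 2 and let T be a clause tree for x₁,…,x_k. Then the Max2XOR problem Tᵗ(T) consists of exactly 3(k−1) constraints, and every assignment of all its variables (leaves and internal auxiliary variables) satisfies at most 2(k−1) of these constraints. -/
/-- A (candidate) clause tree: a full binary tree whose leaves are labeled by (indices of)
the clause variables x_i and whose internal nodes carry (indices of) auxiliary variables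
b_v.  Leaf labels are interpreted by an assignment `x : ℕ → Bool` and internal labels by
an assignment `b : ℕ → Bool`. -/
inductive ClauseTree : Type
  | leaf (i : ℕ)
  | node (v : ℕ) (l r : ClauseTree)

namespace ClauseTree

/-- Labels of the leaves, left to right. -/
def leaves : ClauseTree → List ℕ
  | leaf i => [i]
  | node _ l r => leaves l ++ leaves r

/-- Labels of the internal nodes. -/
def internals : ClauseTree → List ℕ
  | leaf _ => []
  | node v l r => v :: (internals l ++ internals r)

/-- `t` is a clause tree for x₁,…,x_k: its leaves are labeled bijectively by 1,…,k and
its internal auxiliary variables are pairwise distinct (they are fresh by construction,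
living in a namespace separate from the leaf labels). -/
def IsClauseTree (k : ℕ) (t : ClauseTree) : Prop :=
  t.leaves.Nodup ∧ (∀ i, i ∈ t.leaves ↔ i ∈ Finset.Icc 1 k) ∧ t.internals.Nodup

/-- var(v) of the root of `t`: the value of the leaf variable if `t` is a leaf, and the
value of the auxiliary variable b_v if the root is an internal node v. -/
def rootVar (x b : ℕ → Bool) : ClauseTree → Bool
  | leaf i => x i
  | node v _ _ => b v

/-- Number of satisfied constraints among the triangle {p ⊕ q = 1, p ⊕ r = 0, q ⊕ r = 0}. -/
def triCount (p q r : Bool) : ℕ :=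
  (if xor p q = true then 1 else 0) +
  (if xor p r = false then 1 else 0) +
  (if xor q r = false then 1 else 0)

/-- Number of constraints of Tᵗ(t) satisfied by the assignment given by `x` and `b`:
for every internal node v with children u, w, the triangle
{var(u) ⊕ var(w) = 1, var(u) ⊕ b_v = 0, var(w) ⊕ b_v = 0} (each of weight 1/2). -/
def countSat (x b : ℕ → Bool) : ClauseTree → ℕ
  | leaf _ => 0
  | node v l r =>
      countSat x b l + countSat x b r + triCount (rootVar x b l) (rootVar x b r) (b v)

/-- Total number of constraints of Tᵗ(t). -/
def numConstraints : ClauseTree → ℕ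
  | leaf _ => 0
  | node _ l r => numConstraints l + numConstraints r + 3

/-- The OR of the values of the leaves below (the root of) `t`. -/
def orLeaves (x : ℕ → Bool) : ClauseTree → Bool
  | leaf i => x i
  | node _ l r => orLeaves x l || orLeaves x r

/-- The assignment `b` of the internal auxiliary variables agrees with the canonical
extension of `x`: every internal node v gets the OR of the values of the leaves below v. -/
def Agrees (x b : ℕ → Bool) : ClauseTree → Prop
  | leaf _ => True
  | node v l r => b v = orLeaves x (node v l r) ∧ Agrees x b l ∧ Agrees x b r

end ClauseTree

/-!
STATEMENT 14: For k ≥ 2 and any clause tree T for x₁,…,x_k, the Max2XOR problem Tᵗ(T)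
consists of exactly 3(k−1) constraints, and every assignment of all its variables
satisfies at most 2(k−1) of them.
-/
lemma ClauseTree.leaves_length_pos (t : ClauseTree) : 1 ≤ t.leaves.length := by
  induction t with
  | leaf i => simp [ClauseTree.leaves]
  | node v l r ihl ihr => simp [ClauseTree.leaves]; omega

lemma ClauseTree.numConstraints_eq (t : ClauseTree) :
    t.numConstraints = 3 * (t.leaves.length - 1) := by
  induction t with
  | leaf i => simp [ClauseTree.numConstraints, ClauseTree.leaves]
  | node v l r ihl ihr =>
    have hl := l.leaves_length_pos
    have hr := r.leaves_length_pos
    simp [ClauseTree.numConstraints, ClauseTree.leaves, ihl, ihr]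
    omega

lemma ClauseTree.triCount_le (p q r : Bool) : ClauseTree.triCount p q r ≤ 2 := by
  cases p <;> cases q <;> cases r <;> decide

lemma ClauseTree.countSat_le (x b : ℕ → Bool) (t : ClauseTree) :
    ClauseTree.countSat x b t ≤ 2 * (t.leaves.length - 1) := by
  induction t with
  | leaf i => simp [ClauseTree.countSat, ClauseTree.leaves]
  | node v l r ihl ihr =>
    have hl := l.leaves_length_pos
    have hr := r.leaves_length_pos
    have htri := ClauseTree.triCount_le (ClauseTree.rootVar x b l)
      (ClauseTree.rootVar x b r) (b v)
    simp only [ClauseTree.countSat, ClauseTree.leaves, List.length_append]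
    omega

theorem clause_tree_count_and_upper_bound (k : ℕ) (hk : 2 ≤ k)
    (t : ClauseTree) (ht : ClauseTree.IsClauseTree k t) :
    t.numConstraints = 3 * (k - 1) ∧
    ∀ x b : ℕ → Bool, ClauseTree.countSat x b t ≤ 2 * (k - 1) := by
  obtain ⟨hnd, hmem, -⟩ := ht
  have hlen : t.leaves.length = k := by
    have h1 : t.leaves.toFinset = Finset.Icc 1 k := by
      ext i; simp [hmem i]
    have h2 := List.toFinset_card_of_nodup hnd
    rw [h1] at h2
    simpa using h2.symm
  exact ⟨by rw [ClauseTree.numConstraints_eq, hlen],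
    fun x b => by simpa [hlen] using ClauseTree.countSat_le x b t⟩
end
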